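/- arXiv:2602.21968 — 2 statements merged into one kernel-verified Lean document; each statement's English description precedes it below -/
import Mathlib

section
/- Let m = θ + 1 + 2ε with θ ≥ 0, ε > 0. Then for all t ≥ 0 and x, y ∈ ℝ^d with the property that the case (|y| − |x|) ∼ t ≳ 1 fails, the inequality ⟨x⟩^{θ+ε} ⟨t + ||x| − |y||⟩^{-m} ≲ ⟨t⟩^{-1-ε} ⟨y⟩^{θ+1/2+2ε} holds, where ⟨z⟩ = (1+|z|^2)^{1/2}. -/
open Real

/-- Japanese bracket ⟨z⟩ = (1+|z|^2)^(1/2). -/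
noncomputable def jbr (z : ℝ) : ℝ := Real.sqrt (1 + z ^ 2)

lemma jbr_one_le (z : ℝ) : 1 ≤ jbr z := by
  have h := Real.sqrt_le_sqrt (show (1:ℝ) ≤ 1 + z ^ 2 by nlinarith [sq_nonneg z])
  simpa [jbr] using h

lemma jbr_pos (z : ℝ) : 0 < jbr z := lt_of_lt_of_le one_pos (jbr_one_le z)

lemma jbr_mono {a b : ℝ} (ha : 0 ≤ a) (h : a ≤ b) : jbr a ≤ jbr b :=
  Real.sqrt_le_sqrt (by nlinarith)

lemma jbr_peetre {s b c : ℝ} (h : |s| ≤ |b| + |c|) :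
    jbr s ≤ Real.sqrt 2 * (jbr b * jbr c) := by
  rw [jbr, jbr, jbr]
  have hrw : Real.sqrt 2 * (Real.sqrt (1 + b ^ 2) * Real.sqrt (1 + c ^ 2)) =
      Real.sqrt (2 * ((1 + b ^ 2) * (1 + c ^ 2))) := by
    rw [Real.sqrt_mul (by norm_num), Real.sqrt_mul (by positivity)]
  rw [hrw]
  apply Real.sqrt_le_sqrt
  have h1 : s ^ 2 ≤ (|b| + |c|) ^ 2 := by
    have := abs_nonneg s
    nlinarith [sq_abs s]
  have h2 : 2 * |b| * |c| ≤ b ^ 2 + c ^ 2 := by nlinarith [sq_nonneg (|b| - |c|), sq_abs b, sq_abs c]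
  nlinarith [sq_abs b, sq_abs c, sq_nonneg (b * c)]

/-- Key pointwise weight inequality: with m = θ + 1 + 2ε, for t ≥ 0 and x, y for
    which the kernel case (|y| − |x|) ∼ t ≳ 1 fails,
    ⟨x⟩^{θ+ε} ⟨t + ||x|−|y||⟩^{-m} ≲ ⟨t⟩^{-1-ε} ⟨y⟩^{θ+1/2+2ε}. -/
theorem stmt3 (d : ℕ) (θ ε : ℝ) (hθ : 0 ≤ θ) (hε : 0 < ε) :
    ∃ C : ℝ, 0 < C ∧
      ∀ (t : ℝ) (x y : EuclideanSpace ℝ (Fin d)), 0 ≤ t →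
        ¬(1 ≤ t ∧ t / 2 ≤ ‖y‖ - ‖x‖ ∧ ‖y‖ - ‖x‖ ≤ 2 * t) →
        jbr ‖x‖ ^ (θ + ε) * jbr (t + |‖x‖ - ‖y‖|) ^ (-(θ + 1 + 2 * ε)) ≤
          C * (jbr t ^ (-(1 + ε)) * jbr ‖y‖ ^ (θ + 1 / 2 + 2 * ε)) := by
  refine ⟨Real.sqrt 2 ^ (θ + ε), by positivity, ?_⟩
  intro t x y ht _
  set a := |‖x‖ - ‖y‖| with ha
  have ha0 : 0 ≤ a := abs_nonneg _
  have hpe : jbr ‖x‖ ≤ Real.sqrt 2 * (jbr ‖y‖ * jbr a) := by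
    apply jbr_peetre
    have : ‖x‖ ≤ ‖y‖ + a := by
      have := abs_sub_abs_le_abs_sub ‖x‖ ‖y‖
      have h2 : ‖x‖ - ‖y‖ ≤ a := le_abs_self _
      linarith
    rw [abs_of_nonneg (norm_nonneg x), abs_of_nonneg (norm_nonneg y), abs_of_nonneg ha0]
    exact this
  have hθε : 0 ≤ θ + ε := by linarith
  -- bound for the numerator
  have h1 : jbr ‖x‖ ^ (θ + ε) ≤ Real.sqrt 2 ^ (θ + ε) * (jbr ‖y‖ ^ (θ + ε) * jbr a ^ (θ + ε)) := by
    calc jbr ‖x‖ ^ (θ + ε) ≤ (Real.sqrt 2 * (jbr ‖y‖ * jbr a)) ^ (θ + ε) :=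
          Real.rpow_le_rpow (le_of_lt (jbr_pos _)) hpe hθε
      _ = Real.sqrt 2 ^ (θ + ε) * (jbr ‖y‖ ^ (θ + ε) * jbr a ^ (θ + ε)) := by
          rw [Real.mul_rpow (Real.sqrt_nonneg 2) (mul_nonneg (jbr_pos _).le (jbr_pos _).le),
            Real.mul_rpow (jbr_pos _).le (jbr_pos _).le]
  -- bound for ⟨t+a⟩^m from below
  have hta_t : jbr t ≤ jbr (t + a) := jbr_mono ht (by linarith)
  have hta_a : jbr a ≤ jbr (t + a) := jbr_mono ha0 (by linarith)
  have h2 : jbr t ^ (1 + ε) * jbr a ^ (θ + ε) ≤ jbr (t + a) ^ (θ + 1 + 2 * ε) := by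
    have e1 : jbr t ^ (1 + ε) ≤ jbr (t + a) ^ (1 + ε) :=
      Real.rpow_le_rpow (le_of_lt (jbr_pos _)) hta_t (by linarith)
    have e2 : jbr a ^ (θ + ε) ≤ jbr (t + a) ^ (θ + ε) :=
      Real.rpow_le_rpow (le_of_lt (jbr_pos _)) hta_a hθε
    calc jbr t ^ (1 + ε) * jbr a ^ (θ + ε)
        ≤ jbr (t + a) ^ (1 + ε) * jbr (t + a) ^ (θ + ε) := by
          exact mul_le_mul e1 e2 (Real.rpow_nonneg (jbr_pos _).le _)
            (Real.rpow_nonneg (jbr_pos _).le _)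
      _ = jbr (t + a) ^ (θ + 1 + 2 * ε) := by
          rw [← Real.rpow_add (jbr_pos _)]; ring_nf
  -- bound jbr ‖y‖ ^ (θ+ε) ≤ jbr ‖y‖ ^ (θ+1/2+2ε)
  have h3 : jbr ‖y‖ ^ (θ + ε) ≤ jbr ‖y‖ ^ (θ + 1 / 2 + 2 * ε) :=
    Real.rpow_le_rpow_of_exponent_le (jbr_one_le _) (by linarith)
  have hposT : (0:ℝ) < jbr t ^ (1 + ε) := Real.rpow_pos_of_pos (jbr_pos _) _
  have hposA : (0:ℝ) < jbr a ^ (θ + ε) := Real.rpow_pos_of_pos (jbr_pos _) _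
  have hposM : (0:ℝ) < jbr (t + a) ^ (θ + 1 + 2 * ε) := Real.rpow_pos_of_pos (jbr_pos _) _
  rw [Real.rpow_neg (le_of_lt (jbr_pos _)), Real.rpow_neg (le_of_lt (jbr_pos _))]
  rw [mul_comm (jbr t ^ (1 + ε))⁻¹, ← div_eq_mul_inv, ← div_eq_mul_inv, mul_div_assoc',
    div_le_div_iff₀ hposM hposT]
  calc jbr ‖x‖ ^ (θ + ε) * jbr t ^ (1 + ε)
      ≤ (Real.sqrt 2 ^ (θ + ε) * (jbr ‖y‖ ^ (θ + ε) * jbr a ^ (θ + ε))) * jbr t ^ (1 + ε) :=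
        mul_le_mul_of_nonneg_right h1 (le_of_lt hposT)
    _ = Real.sqrt 2 ^ (θ + ε) * jbr ‖y‖ ^ (θ + ε) * (jbr t ^ (1 + ε) * jbr a ^ (θ + ε)) := by
        ring
    _ ≤ Real.sqrt 2 ^ (θ + ε) * jbr ‖y‖ ^ (θ + 1 / 2 + 2 * ε) * jbr (t + a) ^ (θ + 1 + 2 * ε) := by
        apply mul_le_mul _ h2 (mul_pos hposT hposA).le
          (mul_nonneg (Real.rpow_nonneg (Real.sqrt_nonneg 2) _)
            (Real.rpow_nonneg (jbr_pos _).le _))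
        exact mul_le_mul_of_nonneg_left h3 (Real.rpow_nonneg (Real.sqrt_nonneg 2) _)
    _ = Real.sqrt 2 ^ (θ + ε) * jbr ‖y‖ ^ (θ + 1 / 2 + 2 * ε) * jbr (t + a) ^ (θ + 1 + 2 * ε) := rfl
end

section
/- Let u be an L^2 solution of mass-critical NLS blowing up at time T with asymptotic profile z^* ∈ L^2 in the sense that ‖u(t) − z^*‖_{L^2(|x| ≥ ρ√(T−t))} → 0 as t → T for every ρ > 0, and suppose M(z^*) ≤ M(u) − M(Q) and λ(t_n) → 0 along some sequence t_n → T with M(1_{|x| ≥ λ(t_n)}(u(t_n) − z^*)) ≤ δ^2. Then limsup_n M(1_{|x| < λ(t_n)} u(t_n)) ≥ M(Q) − δ^2. -/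
/-!
Write `f = u(tₙ) - z⋆` and `rₙ = √(T - tₙ)`. By the triangle inequality in `L²`, the mass of
`u(tₙ)` outside `B(rₙ)` is at most `(‖f‖_{L²(|x| ≥ rₙ)} + ‖z⋆‖)² → M(z⋆)`, so at least
`M(u) - M(z⋆) - o(1)` of it lies in `B(rₙ)`, where `z⋆` carries only `o(1)` mass. Hence
`M(f) ≥ M(u) - M(z⋆) - o(1) ≥ M(Q) - o(1)`, which replaces the mass decoupling coming from weak
convergence. Discarding the exterior tail `δ²` of `f` and the `o(1)` mass of `z⋆` in
`B(λ(tₙ))` leaves mass at least `M(Q) - δ² - o(1)` for `u(tₙ)` in `B(λ(tₙ))`.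
-/

open MeasureTheory Filter

/-- Mass of an L² function. -/
noncomputable def massOf {d : ℕ} (f : EuclideanSpace ℝ (Fin d) → ℂ) : ℝ :=
  ∫ x, ‖f x‖ ^ 2

open Topology Metric

/-- `(√c - √w)₊²`: the lower bound for `‖f‖²` given by the triangle inequality from
`‖f - g‖² ≥ c` and `‖g‖² = w`. -/
noncomputable def sqrtSubSq (c w : ℝ) : ℝ := max 0 (√c - √w) ^ 2

theorem sqrtSubSq_le {a b c w : ℝ} (ha : 0 ≤ a) (h : √b ≤ √a + √w) (hc : c ≤ b) :
    sqrtSubSq c w ≤ a := by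
  have hcb := Real.sqrt_le_sqrt hc
  calc sqrtSubSq c w ≤ √a ^ 2 :=
        pow_le_pow_left₀ (le_max_left _ _) (max_le (Real.sqrt_nonneg a) (by linarith)) 2
    _ = a := Real.sq_sqrt ha

theorem le_sqrtSubSq_zero (c : ℝ) : c ≤ sqrtSubSq c 0 := by
  simp [sqrtSubSq, Real.sq_sqrt']

theorem Filter.Tendsto.sqrtSubSq {ι : Type*} {l : Filter ι} {c w : ι → ℝ} {c₀ w₀ : ℝ}
    (hc : Tendsto c l (𝓝 c₀)) (hw : Tendsto w l (𝓝 w₀)) :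
    Tendsto (fun i => sqrtSubSq (c i) (w i)) l (𝓝 (sqrtSubSq c₀ w₀)) :=
  (tendsto_const_nhds.max (hc.sqrt.sub hw.sqrt)).pow 2

section L2Mass

variable {α E : Type*} {m : MeasurableSpace α} {μ : Measure α} [NormedAddCommGroup E]
  {f g : α → E}

theorem MeasureTheory.MemLp.toReal_eLpNorm_two (hf : MemLp f 2 μ) :
    (eLpNorm f 2 μ).toReal = √(∫ a, ‖f a‖ ^ 2 ∂μ) := by
  rw [hf.eLpNorm_eq_integral_rpow_norm two_ne_zero ENNReal.ofNat_ne_top,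
    ENNReal.toReal_ofReal (by positivity), Real.sqrt_eq_rpow]
  norm_num

theorem sqrt_integral_norm_sub_sq_le (hf : MemLp f 2 μ) (hg : MemLp g 2 μ) :
    √(∫ a, ‖f a - g a‖ ^ 2 ∂μ) ≤ √(∫ a, ‖f a‖ ^ 2 ∂μ) + √(∫ a, ‖g a‖ ^ 2 ∂μ) := by
  have hfg := (hf.sub hg).toReal_eLpNorm_two
  simp only [Pi.sub_apply] at hfg
  rw [← hf.toReal_eLpNorm_two, ← hg.toReal_eLpNorm_two, ← hfg]
  exact ENNReal.toReal_le_add (eLpNorm_sub_le hf.1 hg.1 one_le_two) hf.2.ne hg.2.ne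

theorem sqrt_integral_norm_sq_le (hf : MemLp f 2 μ) (hg : MemLp g 2 μ) :
    √(∫ a, ‖f a‖ ^ 2 ∂μ) ≤ √(∫ a, ‖f a - g a‖ ^ 2 ∂μ) + √(∫ a, ‖g a‖ ^ 2 ∂μ) := by
  have hfg := (hf.sub hg).toReal_eLpNorm_two
  simp only [Pi.sub_apply] at hfg
  rw [← hf.toReal_eLpNorm_two, ← hg.toReal_eLpNorm_two, ← hfg]
  refine ENNReal.toReal_le_add ?_ (hf.sub hg).2.ne hg.2.ne
  simpa using eLpNorm_add_le (hf.sub hg).1 hg.1 one_le_two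

theorem sqrtSubSq_le_integral_norm_sq (hf : MemLp f 2 μ) (hg : MemLp g 2 μ) {c : ℝ}
    (hc : c ≤ ∫ a, ‖f a - g a‖ ^ 2 ∂μ) :
    sqrtSubSq c (∫ a, ‖g a‖ ^ 2 ∂μ) ≤ ∫ a, ‖f a‖ ^ 2 ∂μ :=
  sqrtSubSq_le (integral_nonneg fun _ => by positivity) (sqrt_integral_norm_sub_sq_le hf hg) hc

theorem sqrtSubSq_le_integral_norm_sub_sq (hf : MemLp f 2 μ) (hg : MemLp g 2 μ) {c : ℝ}
    (hc : c ≤ ∫ a, ‖f a‖ ^ 2 ∂μ) :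
    sqrtSubSq c (∫ a, ‖g a‖ ^ 2 ∂μ) ≤ ∫ a, ‖f a - g a‖ ^ 2 ∂μ :=
  sqrtSubSq_le (integral_nonneg fun _ => by positivity) (sqrt_integral_norm_sq_le hf hg) hc

theorem integral_norm_sq_sub_le_setIntegral (hf : MemLp f 2 μ) (hg : MemLp g 2 μ) {S : Set α}
    (hS : MeasurableSet S) :
    ∫ a, ‖f a‖ ^ 2 ∂μ - (√(∫ a in Sᶜ, ‖f a - g a‖ ^ 2 ∂μ) + √(∫ a, ‖g a‖ ^ 2 ∂μ)) ^ 2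
      ≤ ∫ a in S, ‖f a‖ ^ 2 ∂μ := by
  have hsplit := integral_add_compl hS (hf.integrable_norm_pow two_ne_zero)
  have hexterior : √(∫ a in Sᶜ, ‖f a‖ ^ 2 ∂μ)
      ≤ √(∫ a in Sᶜ, ‖f a - g a‖ ^ 2 ∂μ) + √(∫ a, ‖g a‖ ^ 2 ∂μ) :=
    (sqrt_integral_norm_sq_le (hf.restrict _) (hg.restrict _)).trans <| add_le_add_right
      (Real.sqrt_le_sqrt (setIntegral_le_integral (hg.integrable_norm_pow two_ne_zero)
        (.of_forall fun _ => by positivity))) _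
  have := pow_le_pow_left₀ (Real.sqrt_nonneg _) hexterior 2
  rw [Real.sq_sqrt (integral_nonneg fun _ => by positivity)] at this
  linarith

theorem sqrtSubSq_le_integral_norm_sub_sq_of_exterior (hf : MemLp f 2 μ) (hg : MemLp g 2 μ)
    {S : Set α} (hS : MeasurableSet S) :
    sqrtSubSq (∫ a, ‖f a‖ ^ 2 ∂μ - (√(∫ a in Sᶜ, ‖f a - g a‖ ^ 2 ∂μ)
      + √(∫ a, ‖g a‖ ^ 2 ∂μ)) ^ 2) (∫ a in S, ‖g a‖ ^ 2 ∂μ) ≤ ∫ a, ‖f a - g a‖ ^ 2 ∂μ :=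
  (sqrtSubSq_le_integral_norm_sub_sq (hf.restrict _) (hg.restrict _)
    (integral_norm_sq_sub_le_setIntegral hf hg hS)).trans
    (setIntegral_le_integral ((hf.sub hg).integrable_norm_pow two_ne_zero)
      (.of_forall fun _ => by positivity))

theorem sqrtSubSq_le_setIntegral_norm_sq_of_tail (hf : MemLp f 2 μ) (hg : MemLp g 2 μ)
    {R : Set α} (hR : MeasurableSet R) {c δ : ℝ}
    (htail : ∫ a in Rᶜ, ‖f a - g a‖ ^ 2 ∂μ ≤ δ) (hc : c ≤ ∫ a, ‖f a - g a‖ ^ 2 ∂μ) :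
    sqrtSubSq (c - δ) (∫ a in R, ‖g a‖ ^ 2 ∂μ) ≤ ∫ a in R, ‖f a‖ ^ 2 ∂μ := by
  have hsplit := integral_add_compl hR ((hf.sub hg).integrable_norm_pow two_ne_zero)
  simp only [Pi.sub_apply] at hsplit
  exact sqrtSubSq_le_integral_norm_sq (hf.restrict _) (hg.restrict _) (by linarith)

end L2Mass

section ShrinkingBalls

variable {α : Type*} [MetricSpace α] [ProperSpace α] [MeasurableSpace α]
  [OpensMeasurableSpace α] {μ : Measure α} [IsFiniteMeasureOnCompacts μ] [NullSingletonClass μ]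

theorem tendsto_measure_ball_zero (x : α) : Tendsto (fun r => μ (ball x r)) (𝓝 0) (𝓝 0) := by
  have h := tendsto_measure_cthickening_of_isCompact (μ := μ) (isCompact_singleton (x := x))
  rw [measure_singleton] at h
  refine tendsto_of_tendsto_of_tendsto_of_le_of_le tendsto_const_nhds h (fun _ => zero_le)
    fun r => measure_mono ?_
  rw [← thickening_singleton]
  exact thickening_subset_cthickening r _

theorem tendsto_setIntegral_ball_zero {ι : Type*} {l : Filter ι} {f : α → ℝ}
    (hf : Integrable f μ) (x : α) {c : ι → ℝ} (hc : Tendsto c l (𝓝 0)) :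
    Tendsto (fun i => ∫ y in ball x (c i), f y ∂μ) l (𝓝 0) :=
  hf.tendsto_setIntegral_nhds_zero ((tendsto_measure_ball_zero x).comp hc)

end ShrinkingBalls

theorem le_limsup_of_tendsto_of_le {ι : Type*} {l : Filter ι} [l.NeBot] {b a : ι → ℝ} {ℓ : ℝ}
    (hb : Tendsto b l (𝓝 ℓ)) (hba : ∀ i, b i ≤ a i) (ha : IsBoundedUnder (· ≤ ·) l a) :
    ℓ ≤ limsup a l :=
  hb.limsup_eq ▸ limsup_le_limsup (.of_forall hba) hb.isBoundedUnder_ge.isCoboundedUnder_le ha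

theorem stmt19_general (d : ℕ) (hd : 1 ≤ d)
    (u : ℝ → EuclideanSpace ℝ (Fin d) → ℂ)
    (zst : EuclideanSpace ℝ (Fin d) → ℂ)
    (T Mu MQ δ : ℝ)
    (hmeas : ∀ t, AEStronglyMeasurable (u t)
      (volume : Measure (EuclideanSpace ℝ (Fin d))))
    (hzmeas : AEStronglyMeasurable zst
      (volume : Measure (EuclideanSpace ℝ (Fin d))))
    (hu2 : ∀ t, Integrable (fun x => ‖u t x‖ ^ 2)
      (volume : Measure (EuclideanSpace ℝ (Fin d))))
    (hz2 : Integrable (fun x => ‖zst x‖ ^ 2)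
      (volume : Measure (EuclideanSpace ℝ (Fin d))))
    (hmass : ∀ t < T, massOf (u t) = Mu)
    (hprof : ∀ ρ > (0 : ℝ),
      Tendsto (fun t => ∫ x in {x : EuclideanSpace ℝ (Fin d) |
          ρ * Real.sqrt (T - t) ≤ ‖x‖}, ‖u t x - zst x‖ ^ 2)
        (nhdsWithin T (Set.Iio T)) (nhds 0))
    (hz : massOf zst ≤ Mu - MQ)
    (tn lam : ℕ → ℝ)
    (htn : ∀ n, tn n < T) (htT : Tendsto tn atTop (nhds T))
    (hlam : Tendsto lam atTop (nhds 0))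
    (htail : ∀ n, ∫ x in {x : EuclideanSpace ℝ (Fin d) | lam n ≤ ‖x‖},
      ‖u (tn n) x - zst x‖ ^ 2 ≤ δ ^ 2) :
    MQ - δ ^ 2 ≤ limsup (fun n =>
      ∫ x in {x : EuclideanSpace ℝ (Fin d) | ‖x‖ < lam n}, ‖u (tn n) x‖ ^ 2)
      atTop := by
  have : Nonempty (Fin d) := ⟨⟨0, hd⟩⟩
  have hball (c : ℝ) : {x : EuclideanSpace ℝ (Fin d) | ‖x‖ < c} = ball 0 c :=
    (ball_zero_eq c).symm
  have hext (c : ℝ) : {x : EuclideanSpace ℝ (Fin d) | c ≤ ‖x‖} = (ball 0 c)ᶜ := by ext; simp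
  simp only [hball, hext] at hprof htail ⊢
  have hzL2 := (memLp_two_iff_integrable_sq_norm hzmeas).2 hz2
  have huL2 t := (memLp_two_iff_integrable_sq_norm (hmeas t)).2 (hu2 t)
  have hr : Tendsto (fun n => √(T - tn n)) atTop (𝓝 0) := by
    simpa using ((tendsto_const_nhds (x := T)).sub htT).sqrt
  have hexterior : Tendsto (fun n => ∫ x in (ball 0 √(T - tn n))ᶜ, ‖u (tn n) x - zst x‖ ^ 2)
      atTop (𝓝 0) := by
    simpa [Function.comp_def] using
      (hprof 1 one_pos).comp (tendsto_nhdsWithin_iff.2 ⟨htT, .of_forall htn⟩)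
  have hlower := (((tendsto_const_nhds (x := Mu)).sub
    ((hexterior.sqrt.add (tendsto_const_nhds (x := √(massOf zst)))).pow 2)).sqrtSubSq
    (tendsto_setIntegral_ball_zero hz2 0 hr)).sub_const (δ ^ 2) |>.sqrtSubSq
    (tendsto_setIntegral_ball_zero hz2 0 hlam)
  refine (le_limsup_of_tendsto_of_le hlower (fun n => ?_) ?_).trans' ?_
  · refine sqrtSubSq_le_setIntegral_norm_sq_of_tail (huL2 _) hzL2 measurableSet_ball (htail n) ?_
    rw [← hmass _ (htn n)]
    exact sqrtSubSq_le_integral_norm_sub_sq_of_exterior (huL2 _) hzL2 measurableSet_ball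
  · exact isBoundedUnder_of ⟨Mu, fun n => (setIntegral_le_integral (hu2 _)
      (.of_forall fun _ => by positivity)).trans_eq (hmass _ (htn n))⟩
  · have hMz : 0 ≤ massOf zst := integral_nonneg fun _ => by positivity
    simp only [Real.sqrt_zero, zero_add, Real.sq_sqrt hMz]
    linarith [le_sqrtSubSq_zero (Mu - massOf zst),
      le_sqrtSubSq_zero (sqrtSubSq (Mu - massOf zst) 0 - δ ^ 2)]

/-- Concluding argument of Corollary "loglog la Bourgain": if u is a mass-Mu
    solution blowing up at T with asymptotic profile z⋆ (exterior L² convergence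
    at every parabolic scale), M(z⋆) ≤ M(u) − M(Q), and along t_n → T⁻ one has
    λ(t_n) → 0 with exterior tail mass ≤ δ², then
    limsup_n M(1_{|x|<λ(t_n)} u(t_n)) ≥ M(Q) − δ². -/
theorem stmt19 (d : ℕ) (hd : 1 ≤ d)
    (u : ℝ → EuclideanSpace ℝ (Fin d) → ℂ)
    (zst : EuclideanSpace ℝ (Fin d) → ℂ)
    (T Mu MQ δ : ℝ) (hMQ : 0 < MQ) (hδ : 0 < δ)
    (hmeas : ∀ t, AEStronglyMeasurable (u t)
      (volume : Measure (EuclideanSpace ℝ (Fin d))))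
    (hzmeas : AEStronglyMeasurable zst
      (volume : Measure (EuclideanSpace ℝ (Fin d))))
    (hu2 : ∀ t, Integrable (fun x => ‖u t x‖ ^ 2)
      (volume : Measure (EuclideanSpace ℝ (Fin d))))
    (hz2 : Integrable (fun x => ‖zst x‖ ^ 2)
      (volume : Measure (EuclideanSpace ℝ (Fin d))))
    (hmass : ∀ t < T, massOf (u t) = Mu)
    (hprof : ∀ ρ > (0 : ℝ),
      Tendsto (fun t => ∫ x in {x : EuclideanSpace ℝ (Fin d) |
          ρ * Real.sqrt (T - t) ≤ ‖x‖}, ‖u t x - zst x‖ ^ 2)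
        (nhdsWithin T (Set.Iio T)) (nhds 0))
    (hz : massOf zst ≤ Mu - MQ)
    (tn lam : ℕ → ℝ)
    (htn : ∀ n, tn n < T) (htT : Tendsto tn atTop (nhds T))
    (hlampos : ∀ n, 0 < lam n) (hlam : Tendsto lam atTop (nhds 0))
    (htail : ∀ n, ∫ x in {x : EuclideanSpace ℝ (Fin d) | lam n ≤ ‖x‖},
      ‖u (tn n) x - zst x‖ ^ 2 ≤ δ ^ 2) :
    MQ - δ ^ 2 ≤ limsup (fun n =>
      ∫ x in {x : EuclideanSpace ℝ (Fin d) | ‖x‖ < lam n}, ‖u (tn n) x‖ ^ 2)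
      atTop :=
  stmt19_general d hd u zst T Mu MQ δ hmeas hzmeas hu2 hz2 hmass hprof hz tn lam htn htT hlam htail
end
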